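/- arXiv:2112.07499 — 8 statements merged into one kernel-verified Lean document; each statement's English description precedes it below -/
import Mathlib

section
/- Let G be a permutation graph on vertex set {1,…,n} determined by a permutation σ, and let P = (v_1, v_2, …, v_l) be a shortest path in G. Then for every i with 2 ≤ i ≤ l−1, the edges (v_{i−1}, v_i) and (v_i, v_{i+1}) are of different types: one is of L-type and the other is of R-type. -/
/-!
A subwalk of a shortest walk is shortest, so two vertices two steps apart on a shortest path are
not adjacent. In a permutation graph, however, `a < b < c` with `a ~ b ~ c` forces
`σ c < σ b < σ a`, hence `a ~ c`; so the middle vertex of any two consecutive edges is either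
smaller or larger than both of its neighbours.
-/

/-- The permutation graph on vertex set `Fin n` determined by a permutation `σ`:
vertices `i < j` are adjacent iff `σ j < σ i`. -/
def permGraph {n : ℕ} (σ : Equiv.Perm (Fin n)) : SimpleGraph (Fin n) where
  Adj i j := (i < j ∧ σ j < σ i) ∨ (j < i ∧ σ i < σ j)
  symm := ⟨by intro i j h; tauto⟩
  loopless := ⟨by intro i h; rcases h with ⟨h, _⟩ | ⟨h, _⟩ <;> exact absurd h (lt_irrefl i)⟩

namespace SimpleGraph.Walk

variable {V : Type*} {G : SimpleGraph V} {u v : V}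

theorem not_adj_getVert_add_two {p : G.Walk u v} (hp : p.length = G.dist u v) {i : ℕ}
    (hi : i + 2 ≤ p.length) : ¬G.Adj (p.getVert i) (p.getVert (i + 2)) := by
  have hdist := length_eq_dist_of_subwalk hp
    (((p.drop i).isSubwalk_take 2).trans (p.isSubwalk_drop i))
  rw [take_length, drop_length, drop_getVert] at hdist
  rw [← dist_eq_one_iff_adj, ← hdist]
  omega

end SimpleGraph.Walk

namespace permGraph

variable {n : ℕ} {σ : Equiv.Perm (Fin n)} {a b c : Fin n}

theorem lt_and_lt_or_lt_and_lt_of_not_adj (hab : (permGraph σ).Adj a b)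
    (hbc : (permGraph σ).Adj b c) (hac : ¬(permGraph σ).Adj a c) :
    b < a ∧ b < c ∨ a < b ∧ c < b := by
  grind [permGraph]

end permGraph

theorem permGraph_shortestPath_edges_alternate_general {n : ℕ} (σ : Equiv.Perm (Fin n))
    {u v : Fin n} (P : (permGraph σ).Walk u v)
    (hshort : P.length = (permGraph σ).dist u v)
    (i : ℕ) (hi : i + 2 ≤ P.length) :
    (P.support.getD (i + 1) u < P.support.getD i u ∧
        P.support.getD (i + 1) u < P.support.getD (i + 2) u) ∨
      (P.support.getD i u < P.support.getD (i + 1) u ∧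
        P.support.getD (i + 2) u < P.support.getD (i + 1) u) := by
  have hgetD (k : ℕ) (hk : k ≤ P.length) : P.support.getD k u = P.getVert k := by
    rw [List.getD_eq_getElem _ _ (by rw [P.length_support]; omega),
      P.support_getElem_eq_getVert]
  rw [hgetD i (by omega), hgetD (i + 1) (by omega), hgetD (i + 2) hi]
  exact permGraph.lt_and_lt_or_lt_and_lt_of_not_adj (P.adj_getVert_succ (by omega))
    (P.adj_getVert_succ (by omega)) (P.not_adj_getVert_add_two hshort hi)

/-- In a permutation graph, along any shortest path the edges alternate types:
for consecutive edges `(v_i, v_{i+1})` and `(v_{i+1}, v_{i+2})`, one is of L-type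
(next vertex smaller) and the other is of R-type (next vertex larger). -/
theorem permGraph_shortestPath_edges_alternate {n : ℕ} (σ : Equiv.Perm (Fin n))
    {u v : Fin n} (P : (permGraph σ).Walk u v) (hpath : P.IsPath)
    (hshort : P.length = (permGraph σ).dist u v)
    (i : ℕ) (hi : i + 2 ≤ P.length) :
    (P.support.getD (i + 1) u < P.support.getD i u ∧
        P.support.getD (i + 1) u < P.support.getD (i + 2) u) ∨
      (P.support.getD i u < P.support.getD (i + 1) u ∧
        P.support.getD (i + 2) u < P.support.getD (i + 1) u) :=
  permGraph_shortestPath_edges_alternate_general σ P hshort i hi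
end

section
/- Let G be a permutation graph on vertex set {1,…,n} determined by a permutation σ, let s and t be vertices with graph distance d(s,t) ≥ 3, and let P = (s = v_1, v_2, …, v_l = t) be an s–t shortest path. If P′ is an s–t shortest path obtained from P by a single reconfiguration step (changing exactly one internal vertex), then the first edge of P′ (the edge incident to s) has the same type (L-type or R-type) as the first edge of P. -/
/-- Two lists (vertex sequences) differ in exactly one position. -/
def OneStep {α : Type*} (l₁ l₂ : List α) : Prop :=
  l₁.length = l₂.length ∧ ∃ i : ℕ, l₁[i]? ≠ l₂[i]? ∧ ∀ j, j ≠ i → l₁[j]? = l₂[j]?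

namespace SimpleGraph.Walk

variable {V : Type*} {G : SimpleGraph V}

theorem exists_eq_cons_cons_cons {s t : V} (P : G.Walk s t) (hP : 3 ≤ P.length) :
    ∃ (a w x : V) (hsa : G.Adj s a) (haw : G.Adj a w) (hwx : G.Adj w x) (Q : G.Walk x t),
      P = cons hsa (cons haw (cons hwx Q)) := by
  match P, hP with
  | cons hsa (cons haw (cons hwx Q)), _ => exact ⟨_, _, _, hsa, haw, hwx, Q, rfl⟩

theorem not_adj_of_length_eq_dist {u v w t : V} (p : G.Walk u v) (q : G.Walk v w)
    (r : G.Walk w t) (hq : 2 ≤ q.length) (h : (p.append (q.append r)).length = G.dist u t) :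
    ¬G.Adj v w := fun hvw => by
  have := G.dist_le (p.append (cons hvw r))
  simp only [length_append, length_cons] at h this
  omega

end SimpleGraph.Walk

section PermGraph

variable {n : ℕ} (σ : Equiv.Perm (Fin n))

theorem permGraph_adj {i j : Fin n} :
    (permGraph σ).Adj i j ↔ (i < j ∧ σ j < σ i) ∨ (j < i ∧ σ i < σ j) := Iff.rfl

theorem permGraph_between_of_common_nbr {s a b w : Fin n} (has : a < s) (hsb : s < b)
    (hsa : (permGraph σ).Adj s a) (hsb' : (permGraph σ).Adj s b)
    (haw : (permGraph σ).Adj a w) (hbw : (permGraph σ).Adj b w)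
    (hsw : ¬(permGraph σ).Adj s w) : a < w ∧ w < b ∧ σ b < σ w ∧ σ w < σ a := by
  simp only [permGraph_adj] at *
  omega

theorem permGraph_adj_or_adj_of_between {a b w x : Fin n}
    (hw : a < w ∧ w < b ∧ σ b < σ w ∧ σ w < σ a) (hwx : (permGraph σ).Adj w x) :
    (permGraph σ).Adj a x ∨ (permGraph σ).Adj b x := by
  simp only [permGraph_adj] at *
  omega

theorem permGraph_lt_iff_lt_of_common_nbrs {s a b w x : Fin n}
    (hsa : (permGraph σ).Adj s a) (hsb : (permGraph σ).Adj s b)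
    (haw : (permGraph σ).Adj a w) (hbw : (permGraph σ).Adj b w) (hwx : (permGraph σ).Adj w x)
    (hsw : ¬(permGraph σ).Adj s w) (hax : ¬(permGraph σ).Adj a x)
    (hbx : ¬(permGraph σ).Adj b x) : a < s ↔ b < s := by
  rcases ((permGraph σ).ne_of_adj hsa).lt_or_gt with has | has <;>
    rcases ((permGraph σ).ne_of_adj hsb).lt_or_gt with hbs | hbs
  · exact iff_of_false (not_lt.2 has.le) (not_lt.2 hbs.le)
  · exact ((permGraph_adj_or_adj_of_between σ
      (permGraph_between_of_common_nbr σ hbs has hsb hsa hbw haw hsw) hwx).elim hbx hax).elim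
  · exact ((permGraph_adj_or_adj_of_between σ
      (permGraph_between_of_common_nbr σ has hbs hsa hsb haw hbw hsw) hwx).elim hax hbx).elim
  · exact iff_of_true has hbs

end PermGraph

open SimpleGraph.Walk in
/-- In a permutation graph, a single reconfiguration step between `s`–`t` shortest
paths (with `d(s,t) ≥ 3`) preserves the type (L-type or R-type) of the first edge:
the first edge of `P` is L-type (i.e. its second vertex is smaller than `s`) iff the
first edge of `P'` is. -/
theorem permGraph_step_preserves_first_edge_type {n : ℕ} (σ : Equiv.Perm (Fin n))
    {s t : Fin n} (hd : 3 ≤ (permGraph σ).dist s t)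
    (P P' : (permGraph σ).Walk s t)
    (hP : P.length = (permGraph σ).dist s t)
    (hP' : P'.length = (permGraph σ).dist s t)
    (hstep : OneStep P.support P'.support) :
    (P.support.getD 1 s < s ↔ P'.support.getD 1 s < s) := by
  obtain ⟨-, i, -, hagree⟩ := hstep
  by_cases hi : i = 1
  swap
  · simp only [List.getD_eq_getElem?_getD, hagree 1 (Ne.symm hi)]
  subst hi
  obtain ⟨a, w, x, hsa, haw, hwx, Q, rfl⟩ := P.exists_eq_cons_cons_cons (hP ▸ hd)
  obtain ⟨b, w', x', hsb, hbw, hwx', Q', rfl⟩ := P'.exists_eq_cons_cons_cons (hP' ▸ hd)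
  obtain ⟨rfl, rfl⟩ : w = w' ∧ x = x' := by
    have h2 := hagree 2 (by norm_num)
    have h3 := hagree 3 (by norm_num)
    simp only [support_cons, List.getElem?_cons_succ, List.getElem?_cons_zero,
      Option.some.injEq] at h2 h3
    rw [← Q.cons_tail_support, ← Q'.cons_tail_support] at h3
    exact ⟨h2, Option.some.inj h3⟩
  simpa using permGraph_lt_iff_lt_of_common_nbrs σ hsa hsb haw hbw hwx
    (not_adj_of_length_eq_dist nil (cons hsa (cons haw nil)) (cons hwx Q) (by simp) hP)
    (not_adj_of_length_eq_dist (cons hsa nil) (cons haw (cons hwx nil)) Q (by simp) hP)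
    (not_adj_of_length_eq_dist (cons hsb nil) (cons hbw (cons hwx' nil)) Q' (by simp) hP')
end

section
/- Let G be a permutation graph on vertex set {1,…,n} determined by a permutation σ, and let s and t be vertices with graph distance d(s,t) ≥ 3 such that t < s and σ(t) < σ(s) (t lies to the left of s). Then two s–t shortest paths P_1 and P_2 in G are reconfigurable if and only if the first edge of P_1 and the first edge of P_2 (the edges incident to s) are of the same type. -/
/-- One reconfiguration step between `s`–`t` shortest paths: both walks are shortest
and their vertex sequences differ in exactly one position. -/
def ShortestStep {V : Type*} (G : SimpleGraph V) (s t : V) (p q : G.Walk s t) : Prop :=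
  p.length = G.dist s t ∧ q.length = G.dist s t ∧ OneStep p.support q.support

/-- Two `s`–`t` shortest paths are reconfigurable if they are joined by a sequence of
`s`–`t` shortest paths in which consecutive paths differ in exactly one position. -/
def Reconfigurable {V : Type*} (G : SimpleGraph V) (s t : V) (p q : G.Walk s t) : Prop :=
  Relation.ReflTransGen (ShortestStep G s t) p q

/-!
Along a shortest path the edge types alternate, because an induced path `x – y – z` of a
permutation graph cannot turn the same way twice. So when `d(s,t) ≥ 3` the first edge has the
type of the third one, and a change of a single vertex leaves one of these two edges intact.

Conversely, argue by induction on `d(s,t)`. Every vertex `v` at distance `≥ 2` from `s` on a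
shortest `s`–`t` path lies left of `s`: it is not adjacent to `s`, and if `s` lay left of `v`, then
`s`, lying between `t` and `v`, would be no farther from `t` than `v`. Paths with
the same first vertex `a` are handled by induction from `a`: their second edges both have the type
opposite to that of `sa`. Two neighbours of `s` of the same type have nested neighbourhoods in the
region left of `s`, so one of the two paths can take over the other's first vertex in one step.
-/

open SimpleGraph

namespace SimpleGraph

variable {V : Type*} {G : SimpleGraph V} {u v w : V}

lemma not_adj_of_length_add_two_le_dist (p : G.Walk v w) (h : p.length + 2 ≤ G.dist u w) :
    ¬ G.Adj u v :=
  fun huv => by have := G.dist_le (p.cons huv); simp only [Walk.length_cons] at this; omega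

lemma Walk.length_eq_dist_of_cons {h : G.Adj u v} {p : G.Walk v w}
    (hp : (p.cons h).length = G.dist u w) : p.length = G.dist v w :=
  length_eq_dist_of_subwalk hp (p.isSubwalk_cons h)

lemma Walk.eq_of_length_eq_one {p q : G.Walk u v} (hp : p.length = 1) (hq : q.length = 1) :
    p = q := by
  cases p with
  | nil => simp at hp
  | cons h p =>
    cases q with
    | nil => simp at hq
    | cons h' q =>
      simp only [Walk.length_cons, Nat.add_eq_right, Walk.length_eq_zero_iff] at hp hq
      obtain rfl := hp.eq
      obtain rfl := hq.eq
      rw [eq_nil_iff_nil.mpr hp, eq_nil_iff_nil.mpr hq]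

lemma Walk.support_getD_one (p : G.Walk u v) : p.support.getD 1 u = p.snd := by
  cases p <;> simp

end SimpleGraph

section Reconfiguration

variable {α : Type*}

lemma OneStep.cons {l₁ l₂ : List α} (a : α) (h : OneStep l₁ l₂) :
    OneStep (a :: l₁) (a :: l₂) := by
  obtain ⟨hl, i, hne, hoth⟩ := h
  refine ⟨by simp [hl], i + 1, by simpa using hne, ?_⟩
  rintro (_ | j) hj
  · rfl
  · simpa using hoth j (by omega)

lemma oneStep_cons_cons (x : α) {a b : α} (l : List α) (hab : a ≠ b) :
    OneStep (x :: a :: l) (x :: b :: l) := by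
  refine ⟨rfl, 1, by simp [hab], ?_⟩
  rintro (_ | _ | j) hj
  · rfl
  · exact absurd rfl hj
  · rfl

variable {V : Type*} {G : SimpleGraph V} {u v w : V}

lemma OneStep.snd_eq_or {P Q : G.Walk u w} (h : OneStep P.support Q.support)
    (hP : 3 ≤ P.length) :
    P.snd = Q.snd ∨ P.getVert 2 = Q.getVert 2 ∧ P.getVert 3 = Q.getVert 3 := by
  obtain ⟨hlen, i, -, hi⟩ := h
  have hQ : P.length = Q.length := by simpa using hlen
  have key : ∀ j ≤ 3, j ≠ i → P.getVert j = Q.getVert j := fun j hj hji =>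
    Option.some.inj <| by
      rw [P.getVert_eq_support_getElem? (by omega), Q.getVert_eq_support_getElem? (by omega),
        hi j hji]
  by_cases hi1 : i = 1
  · exact .inr ⟨key 2 (by omega) (by omega), key 3 (by omega) (by omega)⟩
  · exact .inl (key 1 (by omega) (Ne.symm hi1))

lemma ShortestStep.cons (h : G.Adj u v) (hd : G.dist v w + 1 = G.dist u w) {p q : G.Walk v w}
    (hpq : ShortestStep G v w p q) : ShortestStep G u w (p.cons h) (q.cons h) := by
  obtain ⟨hp, hq, hs⟩ := hpq
  refine ⟨?_, ?_, by simpa using hs.cons u⟩ <;> simp only [Walk.length_cons] <;> omega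

lemma Reconfigurable.cons (h : G.Adj u v) (hd : G.dist v w + 1 = G.dist u w) {p q : G.Walk v w}
    (hpq : Reconfigurable G v w p q) : Reconfigurable G u w (p.cons h) (q.cons h) :=
  Relation.ReflTransGen.lift (Walk.cons h) (fun _ _ => ShortestStep.cons h hd) _ _ hpq

lemma shortestStep_cons_cons {x y z : V} (hx : G.Adj u x) (hxz : G.Adj x z) (hy : G.Adj u y)
    (hyz : G.Adj y z) (p : G.Walk z w) (hxy : x ≠ y)
    (hp : ((p.cons hxz).cons hx).length = G.dist u w) :
    ShortestStep G u w ((p.cons hxz).cons hx) ((p.cons hyz).cons hy) :=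
  ⟨hp, hp, by simpa using oneStep_cons_cons u p.support hxy⟩

end Reconfiguration

namespace permGraph

variable {n : ℕ} {σ : Equiv.Perm (Fin n)} {a b c s t v w x y z : Fin n}

/-- In the intersection model vertex `i` is the segment joining `i` on one line to `σ i` on a
parallel one; distinct vertices are adjacent iff neither segment lies left of the other. -/
def LeftOf (σ : Equiv.Perm (Fin n)) (i j : Fin n) : Prop := i < j ∧ σ i < σ j

lemma LeftOf.trans (hab : LeftOf σ a b) (hbc : LeftOf σ b c) : LeftOf σ a c :=
  ⟨hab.1.trans hbc.1, hab.2.trans hbc.2⟩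

lemma LeftOf.not_adj (h : LeftOf σ a b) : ¬ (permGraph σ).Adj a b := by
  simp only [permGraph, LeftOf] at *; omega

lemma leftOf_or_leftOf_of_not_adj (hne : a ≠ b) (h : ¬ (permGraph σ).Adj a b) :
    LeftOf σ a b ∨ LeftOf σ b a := by
  have := σ.injective.ne hne
  simp only [permGraph, LeftOf] at *; omega

lemma lt_iff_not_lt_of_not_adj (hab : (permGraph σ).Adj a b) (hbc : (permGraph σ).Adj b c)
    (hac : ¬ (permGraph σ).Adj a c) : b < a ↔ ¬ c < b := by
  simp only [permGraph] at *; omega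

/-- For `z` left of `s`, a neighbour `x < s` of `s` is adjacent to `z` iff `x < z`, and a
neighbour `x > s` iff `σ x < σ z`: neighbours of `s` of the same type have nested neighbourhoods
left of `s`. -/
lemma adj_or_adj_of_lt_iff_lt (hx : (permGraph σ).Adj s x) (hy : (permGraph σ).Adj s y)
    (hxy : x < s ↔ y < s) (hz : LeftOf σ z s) (hw : LeftOf σ w s)
    (hxz : (permGraph σ).Adj x z) (hyw : (permGraph σ).Adj y w) :
    (permGraph σ).Adj x w ∨ (permGraph σ).Adj y z := by
  simp only [permGraph, LeftOf] at *
  rcases le_total x y with h | h <;> rcases le_total (σ x) (σ y) with h' | h' <;> omega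

lemma exists_walk_length_le_of_leftOf (hta : LeftOf σ t a) (hab : LeftOf σ a b)
    (p : (permGraph σ).Walk b t) : ∃ q : (permGraph σ).Walk a t, q.length ≤ p.length := by
  induction p with
  | nil => exact absurd (hta.trans hab).1 (lt_irrefl _)
  | @cons b c t hbc p ih =>
    by_cases hac : a = c
    · subst hac
      exact ⟨p, by simp⟩
    by_cases hadj : (permGraph σ).Adj a c
    · exact ⟨p.cons hadj, by simp⟩
    rcases leftOf_or_leftOf_of_not_adj hac hadj with hac' | hca
    · obtain ⟨q, hq⟩ := ih hta hac'
      exact ⟨q, by simp only [Walk.length_cons]; omega⟩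
    · exact absurd hbc.symm (hca.trans hab).not_adj

lemma leftOf_of_length_add_two_le_dist (hts : LeftOf σ t s) (p : (permGraph σ).Walk v t)
    (hp : p.length + 2 ≤ (permGraph σ).dist s t) : LeftOf σ v s := by
  have hne : v ≠ s := by
    rintro rfl
    have := dist_le p
    omega
  rcases leftOf_or_leftOf_of_not_adj hne (not_adj_of_length_add_two_le_dist p hp ·.symm)
    with h | h
  · exact h
  · obtain ⟨q, hq⟩ := exists_walk_length_le_of_leftOf hts h p
    have := dist_le q
    omega

lemma leftOf_of_adj_of_three_le_dist (hts : LeftOf σ t s) (hsa : (permGraph σ).Adj s a)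
    (hd : 3 ≤ (permGraph σ).dist s t) : LeftOf σ t a := by
  have hne : t ≠ a := by
    rintro rfl
    have := dist_le hsa.toWalk
    simp only [Walk.length_cons, Walk.length_nil] at this
    omega
  have hadj : ¬ (permGraph σ).Adj t a := fun h => by
    have := dist_le (h.symm.toWalk.cons hsa)
    simp only [Walk.length_cons, Walk.length_nil] at this
    omega
  rcases leftOf_or_leftOf_of_not_adj hne hadj with h | h
  · exact h
  · exact absurd hsa.symm (h.trans hts).not_adj

lemma snd_lt_iff_not_lt_of_cons (h : (permGraph σ).Adj s a) (p : (permGraph σ).Walk a t)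
    (hp : (p.cons h).length = (permGraph σ).dist s t) (hd : 2 ≤ (permGraph σ).dist s t) :
    p.snd < a ↔ ¬ a < s := by
  cases p with
  | nil =>
    simp only [Walk.length_cons, Walk.length_nil] at hp
    omega
  | cons h' p =>
    rw [Walk.snd_cons, iff_not_comm]
    refine lt_iff_not_lt_of_not_adj h h' (not_adj_of_length_add_two_le_dist p ?_)
    simp only [Walk.length_cons] at hp
    omega

lemma snd_lt_iff_getVert_three_lt {P : (permGraph σ).Walk s t}
    (hP : P.length = (permGraph σ).dist s t) (hd : 3 ≤ (permGraph σ).dist s t) :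
    P.snd < s ↔ P.getVert 3 < P.getVert 2 := by
  cases P with
  | nil => simp at hd
  | cons h p =>
    cases p with
    | nil =>
      simp only [Walk.length_cons, Walk.length_nil] at hP
      omega
    | cons h' p =>
      have hp := Walk.length_eq_dist_of_cons hP
      have h₁ := snd_lt_iff_not_lt_of_cons h _ hP (by omega)
      have h₂ := snd_lt_iff_not_lt_of_cons h' p hp
        (by simp only [Walk.length_cons] at hP hp; omega)
      simp only [Walk.snd_cons] at h₁ ⊢
      simp only [Walk.getVert_cons_succ, Walk.getVert_zero]
      tauto

lemma snd_lt_iff_of_shortestStep (hd : 3 ≤ (permGraph σ).dist s t)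
    {P Q : (permGraph σ).Walk s t} (h : ShortestStep (permGraph σ) s t P Q) :
    P.snd < s ↔ Q.snd < s := by
  obtain ⟨hP, hQ, hPQ⟩ := h
  rcases hPQ.snd_eq_or (by omega) with h₁ | ⟨h₂, h₃⟩
  · rw [h₁]
  · rw [snd_lt_iff_getVert_three_lt hP hd, snd_lt_iff_getVert_three_lt hQ hd, h₂, h₃]

lemma snd_lt_iff_of_reconfigurable (hd : 3 ≤ (permGraph σ).dist s t)
    {P Q : (permGraph σ).Walk s t} (h : Reconfigurable (permGraph σ) s t P Q) :
    P.snd < s ↔ Q.snd < s := by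
  induction h with
  | refl => rfl
  | tail _ hstep ih => exact ih.trans (snd_lt_iff_of_shortestStep hd hstep)

lemma two_le_dist_of_leftOf (hts : LeftOf σ t s) (P : (permGraph σ).Walk s t) :
    2 ≤ (permGraph σ).dist s t :=
  Reachable.one_lt_dist_of_ne_of_not_adj ⟨P⟩ hts.1.ne' (hts.not_adj ·.symm)

lemma reconfigurable_of_forall_reconfigurable_cons (hts : LeftOf σ t s)
    {P Q : (permGraph σ).Walk s t} (hP : P.length = (permGraph σ).dist s t)
    (hQ : Q.length = (permGraph σ).dist s t) (hPQ : P.snd < s ↔ Q.snd < s)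
    (hcons : ∀ {a} (h : (permGraph σ).Adj s a) (p q : (permGraph σ).Walk a t),
      (p.cons h).length = (permGraph σ).dist s t →
      (q.cons h).length = (permGraph σ).dist s t →
      Reconfigurable (permGraph σ) s t (p.cons h) (q.cons h)) :
    Reconfigurable (permGraph σ) s t P Q := by
  have h2 := two_le_dist_of_leftOf hts P
  cases P with
  | nil => exact absurd hts.1 (lt_irrefl _)
  | @cons _ v _ hsv p =>
  cases Q with
  | nil => exact absurd hts.1 (lt_irrefl _)
  | @cons _ u _ hsu q =>
  cases p with
  | nil => simp only [Walk.length_cons, Walk.length_nil] at hP; omega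
  | cons hvv' p =>
  cases q with
  | nil => simp only [Walk.length_cons, Walk.length_nil] at hQ; omega
  | cons huu' q =>
  simp only [Walk.snd_cons] at hPQ
  by_cases hvu : v = u
  · subst hvu
    exact hcons hsv _ _ hP hQ
  have hv' := leftOf_of_length_add_two_le_dist hts p (by simp [← hP])
  have hu' := leftOf_of_length_add_two_le_dist hts q (by simp [← hQ])
  rcases adj_or_adj_of_lt_iff_lt hsv hsu hPQ hv' hu' hvv' huu' with hvu' | huv'
  · exact (hcons hsv _ (q.cons hvu') hP hQ).tail
      (shortestStep_cons_cons hsv hvu' hsu huu' q hvu hQ)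
  · exact .head (shortestStep_cons_cons hsv hvv' hsu huv' p hvu hP) (hcons hsu _ _ hP hQ)

theorem reconfigurable_of_snd_lt_iff (hts : LeftOf σ t s) {P Q : (permGraph σ).Walk s t}
    (hP : P.length = (permGraph σ).dist s t) (hQ : Q.length = (permGraph σ).dist s t)
    (hPQ : P.snd < s ↔ Q.snd < s) : Reconfigurable (permGraph σ) s t P Q := by
  obtain ⟨k, hk⟩ : ∃ k, (permGraph σ).dist s t = k := ⟨_, rfl⟩
  induction k generalizing s with
  | zero => have := two_le_dist_of_leftOf hts P; omega
  | succ k ih =>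
    refine reconfigurable_of_forall_reconfigurable_cons hts hP hQ hPQ fun h p q hp hq => ?_
    have hp' := Walk.length_eq_dist_of_cons hp
    have hq' := Walk.length_eq_dist_of_cons hq
    have h2 := two_le_dist_of_leftOf hts P
    simp only [Walk.length_cons] at hp hq
    refine Reconfigurable.cons h (by omega) ?_
    rcases (by omega : k = 1 ∨ 2 ≤ k) with rfl | hk2
    · rw [Walk.eq_of_length_eq_one (p := p) (q := q) (by omega) (by omega)]
      exact .refl
    · refine ih (leftOf_of_adj_of_three_le_dist hts h (by omega)) hp' hq' ?_ (by omega)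
      rw [snd_lt_iff_not_lt_of_cons h p (by simpa) (by omega),
        snd_lt_iff_not_lt_of_cons h q (by simpa) (by omega)]

end permGraph

/-- In a permutation graph with `d(s,t) ≥ 3` and `t` to the left of `s`, two `s`–`t`
shortest paths are reconfigurable iff their first edges are of the same type. -/
theorem permGraph_reconfigurable_iff_same_first_edge_type {n : ℕ} (σ : Equiv.Perm (Fin n))
    {s t : Fin n} (hd : 3 ≤ (permGraph σ).dist s t)
    (hts : t < s) (hσts : σ t < σ s)
    (P₁ P₂ : (permGraph σ).Walk s t)
    (hP₁ : P₁.length = (permGraph σ).dist s t)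
    (hP₂ : P₂.length = (permGraph σ).dist s t) :
    Reconfigurable (permGraph σ) s t P₁ P₂ ↔
      (P₁.support.getD 1 s < s ↔ P₂.support.getD 1 s < s) := by
  rw [P₁.support_getD_one, P₂.support_getD_one]
  exact ⟨permGraph.snd_lt_iff_of_reconfigurable hd,
    permGraph.reconfigurable_of_snd_lt_iff ⟨hts, hσts⟩ hP₁ hP₂⟩
end

section
/- Let G be a connected simple graph with vertices s and t, and let G′ be the spanning subgraph of G whose edge set consists of exactly those edges uv of G with |d_G(s,u) − d_G(s,v)| = 1. Then: (i) G′ is bipartite; (ii) a path is an s–t shortest path in G if and only if it is an s–t shortest path in G′; and (iii) two s–t shortest paths are reconfigurable in G if and only if they are reconfigurable in G′. -/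
/-- The spanning subgraph of `G` keeping exactly those edges `uv` with
`|d(s,u) − d(s,v)| = 1`. -/
def levelGraph {V : Type*} (G : SimpleGraph V) (s : V) : SimpleGraph V where
  Adj u v := G.Adj u v ∧ (G.dist s u + 1 = G.dist s v ∨ G.dist s v + 1 = G.dist s u)
  symm := ⟨fun u v h => ⟨h.1.symm, h.2.symm⟩⟩
  loopless := ⟨fun u h => h.1.ne rfl⟩

theorem levelGraph_le {V : Type*} (G : SimpleGraph V) (s : V) : levelGraph G s ≤ G := by
  intro u v h; exact h.1

/-!
Along a shortest walk from `s` the distance to `s` grows by exactly one at each step, so the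
shortest `s`–`t` walks of `G` use only edges of `G' = levelGraph G s`. Hence `G'` has the same
`s`–`t` distance and the same shortest `s`–`t` walks as `G`, and therefore the same
reconfiguration steps between them. The parity of `d(s,·)` is a proper 2-colouring of `G'`.
-/

theorem Relation.reflTransGen_iff_of_injective {α β : Type*} {r : α → α → Prop}
    {p : β → β → Prop} {f : α → β} (hf : Function.Injective f)
    (hrp : ∀ a b, r a b ↔ p (f a) (f b)) (hp : ∀ a y, p (f a) y → y ∈ Set.range f)
    {a b : α} : Relation.ReflTransGen r a b ↔ Relation.ReflTransGen p (f a) (f b) := by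
  refine ⟨fun h ↦ h.lift f fun a b ↦ (hrp a b).1, fun h ↦ ?_⟩
  suffices ∀ x, Relation.ReflTransGen p x (f b) → ∀ a, f a = x → Relation.ReflTransGen r a b from
    this _ h a rfl
  intro x hx
  induction hx using Relation.ReflTransGen.head_induction_on with
  | refl => exact fun a ha ↦ hf ha ▸ .refl
  | head hxz _ ih =>
    rintro a rfl
    obtain ⟨c, rfl⟩ := hp a _ hxz
    exact .head ((hrp a c).2 hxz) (ih c rfl)

namespace SimpleGraph

variable {V : Type*} {G H : SimpleGraph V}

namespace Walk

theorem mapLe_injective (hle : H ≤ G) (u v : V) :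
    Function.Injective (mapLe hle : H.Walk u v → G.Walk u v) :=
  map_injective_of_injective Function.injective_id u v

theorem mapLe_transfer (hle : H ≤ G) {u v : V} (p : G.Walk u v)
    (hp : ∀ e ∈ p.edges, e ∈ H.edgeSet) : (p.transfer H hp).mapLe hle = p := by
  rw [mapLe, ← transfer_eq_map_ofLE, transfer_transfer, transfer_self]
  exact edges_transfer p hp ▸ p.edges_subset_edgeSet

theorem dist_snd_eq_dist_fst_add_one {u v : V} {p : G.Walk u v} (hp : p.length = G.dist u v)
    {d : G.Dart} (hd : d ∈ p.darts) : G.dist u d.snd = G.dist u d.fst + 1 := by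
  induction p using concatRec with
  | Hnil => simp at hd
  | Hconcat p h ih =>
    have hp' : p.length = G.dist _ _ := length_eq_dist_of_subwalk hp (isSubwalk_concat p h)
    rw [darts_concat, List.concat_eq_append, List.mem_append, List.mem_singleton] at hd
    rcases hd with hd | rfl
    · exact ih hp' hd
    · simp [← hp, ← hp']

end Walk

theorem shortestStep_mapLe_iff (hle : H ≤ G) {u v : V} (hdist : H.dist u v = G.dist u v)
    {q₁ q₂ : H.Walk u v} :
    ShortestStep H u v q₁ q₂ ↔ ShortestStep G u v (q₁.mapLe hle) (q₂.mapLe hle) := by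
  simp only [ShortestStep, Walk.length_mapLe, Walk.support_mapLe_eq_support, hdist]

theorem reconfigurable_mapLe_iff (hle : H ≤ G) {u v : V} (hdist : H.dist u v = G.dist u v)
    (hlift : ∀ p : G.Walk u v, p.length = G.dist u v → ∃ q : H.Walk u v, q.mapLe hle = p)
    {q₁ q₂ : H.Walk u v} :
    Reconfigurable H u v q₁ q₂ ↔ Reconfigurable G u v (q₁.mapLe hle) (q₂.mapLe hle) :=
  Relation.reflTransGen_iff_of_injective (Walk.mapLe_injective hle u v)
    (fun _ _ ↦ shortestStep_mapLe_iff hle hdist) fun _ p hp ↦ hlift p hp.2.1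

end SimpleGraph

open SimpleGraph

theorem levelGraph_colorable_two {V : Type*} (G : SimpleGraph V) (s : V) :
    (levelGraph G s).Colorable 2 :=
  ⟨Coloring.mk (fun v ↦ ⟨G.dist s v % 2, Nat.mod_lt _ two_pos⟩) fun {u v} huv heq ↦ by
    have hmod : G.dist s u % 2 = G.dist s v % 2 := congrArg Fin.val heq
    have hlevel := huv.2
    omega⟩

theorem SimpleGraph.Walk.edges_subset_levelGraph {V : Type*} {G : SimpleGraph V} {s t : V}
    {p : G.Walk s t} (hp : p.length = G.dist s t) :
    ∀ e ∈ p.edges, e ∈ (levelGraph G s).edgeSet := by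
  intro e he
  obtain ⟨d, hd, rfl⟩ := List.mem_map.mp he
  exact ⟨d.adj, .inl (dist_snd_eq_dist_fst_add_one hp hd).symm⟩

theorem exists_levelGraph_walk_mapLe_eq {V : Type*} {G : SimpleGraph V} {s t : V}
    (p : G.Walk s t) (hp : p.length = G.dist s t) :
    ∃ q : (levelGraph G s).Walk s t, q.mapLe (levelGraph_le G s) = p :=
  ⟨p.transfer _ (Walk.edges_subset_levelGraph hp), Walk.mapLe_transfer _ p _⟩

theorem levelGraph_dist_eq {V : Type*} (G : SimpleGraph V) (s t : V) :
    (levelGraph G s).dist s t = G.dist s t := by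
  by_cases hst : G.Reachable s t
  · obtain ⟨p, hp⟩ := hst.exists_walk_length_eq_dist
    obtain ⟨q, rfl⟩ := exists_levelGraph_walk_mapLe_eq p hp
    refine le_antisymm ?_ (q.reachable.dist_anti (levelGraph_le G s))
    calc (levelGraph G s).dist s t ≤ q.length := dist_le q
      _ = G.dist s t := by rw [← hp, Walk.length_mapLe]
  · have hst' : ¬(levelGraph G s).Reachable s t := fun h ↦ hst (h.mono (levelGraph_le G s))
    rw [dist_eq_zero_of_not_reachable hst, dist_eq_zero_of_not_reachable hst']

theorem levelGraph_bipartite_shortest_reconf_general {V : Type*} (G : SimpleGraph V)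
    (s t : V) :
    (levelGraph G s).Colorable 2 ∧
    (∀ q : (levelGraph G s).Walk s t,
        q.length = (levelGraph G s).dist s t ↔
          (q.mapLe (levelGraph_le G s)).length = G.dist s t) ∧
    (∀ p : G.Walk s t, p.length = G.dist s t →
        ∃ q : (levelGraph G s).Walk s t, q.mapLe (levelGraph_le G s) = p) ∧
    (∀ q₁ q₂ : (levelGraph G s).Walk s t,
        q₁.length = (levelGraph G s).dist s t →
        q₂.length = (levelGraph G s).dist s t →
        (Reconfigurable (levelGraph G s) s t q₁ q₂ ↔
          Reconfigurable G s t (q₁.mapLe (levelGraph_le G s))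
            (q₂.mapLe (levelGraph_le G s)))) := by
  refine ⟨levelGraph_colorable_two G s, fun q ↦ ?_, exists_levelGraph_walk_mapLe_eq,
    fun q₁ q₂ _ _ ↦ reconfigurable_mapLe_iff _ (levelGraph_dist_eq G s t)
      exists_levelGraph_walk_mapLe_eq⟩
  rw [Walk.length_mapLe, levelGraph_dist_eq]

/-- For a connected graph `G` and the spanning subgraph `G' = levelGraph G s` of edges
joining consecutive BFS layers from `s`: (i) `G'` is bipartite (2-colorable);
(ii) an `s`–`t` path is shortest in `G'` iff it is shortest in `G`, and every `s`–`t`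
shortest path of `G` comes from `G'`; (iii) two `s`–`t` shortest paths are
reconfigurable in `G'` iff they are reconfigurable in `G`. -/
theorem levelGraph_bipartite_shortest_reconf {V : Type*} (G : SimpleGraph V)
    (hconn : G.Connected) (s t : V) :
    (levelGraph G s).Colorable 2 ∧
    (∀ q : (levelGraph G s).Walk s t,
        q.length = (levelGraph G s).dist s t ↔
          (q.mapLe (levelGraph_le G s)).length = G.dist s t) ∧
    (∀ p : G.Walk s t, p.length = G.dist s t →
        ∃ q : (levelGraph G s).Walk s t, q.mapLe (levelGraph_le G s) = p) ∧
    (∀ q₁ q₂ : (levelGraph G s).Walk s t,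
        q₁.length = (levelGraph G s).dist s t →
        q₂.length = (levelGraph G s).dist s t →
        (Reconfigurable (levelGraph G s) s t q₁ q₂ ↔
          Reconfigurable G s t (q₁.mapLe (levelGraph_le G s))
            (q₂.mapLe (levelGraph_le G s)))) :=
  levelGraph_bipartite_shortest_reconf_general G s t
end

section
/- Let G be a simple graph with vertices s and t, let ℓ ≥ 1 be an integer, and let G_ℓ be the graph obtained from G by subdividing every edge exactly ℓ times (replacing each edge by a path with ℓ new internal vertices). If P and Q are two distinct s–t shortest paths in G_ℓ whose vertex sequences agree everywhere except on a single contiguous block of internal positions, then that block consists of at least 2ℓ + 1 vertices. Equivalently, no k′-move between distinct s–t shortest paths in G_ℓ exists for any k′ ≤ 2ℓ. -/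
/-- The vertex type of the graph obtained from `G` by subdividing each edge `ℓ`
times: original vertices, plus `ℓ` new vertices for each edge (edges are recorded as
ordered pairs `(a, b)` with `a < b`). -/
def SubdivVert {V : Type*} [LinearOrder V] (G : SimpleGraph V) (ℓ : ℕ) : Type _ :=
  V ⊕ ({p : V × V // G.Adj p.1 p.2 ∧ p.1 < p.2} × Fin ℓ)

/-- The graph obtained from `G` by subdividing every edge exactly `ℓ` times: each
edge `ab` (with `a < b`) is replaced by the path `a, x₁, …, x_ℓ, b` on new vertices
`x₁, …, x_ℓ`. -/
def subdivide {V : Type*} [LinearOrder V] (G : SimpleGraph V) (ℓ : ℕ) :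
    SimpleGraph (SubdivVert G ℓ) where
  Adj x y :=
    match x, y with
    | Sum.inl _, Sum.inl _ => False
    | Sum.inl u, Sum.inr (e, i) =>
        (u = e.1.1 ∧ (i : ℕ) = 0) ∨ (u = e.1.2 ∧ (i : ℕ) = ℓ - 1)
    | Sum.inr (e, i), Sum.inl v =>
        (v = e.1.1 ∧ (i : ℕ) = 0) ∨ (v = e.1.2 ∧ (i : ℕ) = ℓ - 1)
    | Sum.inr (e, i), Sum.inr (f, j) =>
        e = f ∧ ((i : ℕ) + 1 = (j : ℕ) ∨ (j : ℕ) + 1 = (i : ℕ))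
  symm := by
    constructor
    rintro (u | ⟨e, i⟩) (v | ⟨f, j⟩) h
    · exact h
    · exact h
    · exact h
    · exact ⟨h.1.symm, h.2.symm⟩
  loopless := by
    constructor
    rintro (u | ⟨e, i⟩) h
    · exact h
    · rcases h with ⟨-, h | h⟩ <;> omega

/-- `kMove k l₁ l₂`: the two vertex sequences have the same length and agree
everywhere except possibly on a contiguous block of at most `k` internal positions. -/
def kMove {α : Type*} (k : ℕ) (l₁ l₂ : List α) : Prop :=
  l₁.length = l₂.length ∧
    ∃ a m : ℕ, m ≤ k ∧ 1 ≤ a ∧ a + m + 1 ≤ l₁.length ∧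
      ∀ j : ℕ, j < a ∨ a + m ≤ j → l₁[j]? = l₂[j]?


open SimpleGraph

/-!
A path in the subdivision can leave an original vertex only by running through a whole subdivided
edge, because interior vertices have degree two. Hence every shortest `s`–`t` path is the
subdivision of a walk in `G`, with the original vertices at the positions divisible by `ℓ + 1`.
Two distinct shortest paths come from distinct walks `p ≠ q` of equal length. If `i + 1` is the
first and `j ≥ i + 1` the last index at which `p` and `q` differ, the paths differ at position
`i (ℓ + 1) + 1`, the first step out of the common vertex `p i` along two different edges, and
likewise at position `j (ℓ + 1) + ℓ`, the last step into `p (j + 1)`. These are `2ℓ` or more apart.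
-/

attribute [reducible] SubdivVert

theorem exists_first_last_ne {α : Type*} {f g : ℕ → α} {N : ℕ} (h0 : f 0 = g 0)
    (hN : ∀ k, N ≤ k → f k = g k) (hne : f ≠ g) :
    ∃ i j, i < j ∧ j < N ∧ f i = g i ∧ f (i + 1) ≠ g (i + 1) ∧ f j ≠ g j ∧
      f (j + 1) = g (j + 1) := by
  classical
  have hex : ∃ k, f k ≠ g k := by
    by_contra! h
    exact hne (funext h)
  have hbound : ∀ k, f k ≠ g k → k < N := fun k hk => by
    by_contra! h
    exact hk (hN k h)
  obtain ⟨i, hi⟩ : ∃ i, Nat.find hex = i + 1 :=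
    Nat.exists_eq_succ_of_ne_zero fun h => Nat.find_spec hex (h ▸ h0)
  have hfirst : f (i + 1) ≠ g (i + 1) := hi ▸ Nat.find_spec hex
  have hfirstN := hbound _ hfirst
  set j := Nat.findGreatest (fun k => f k ≠ g k) N
  have hj : f j ≠ g j := Nat.findGreatest_spec (P := fun k => f k ≠ g k) hfirstN.le hfirst
  refine ⟨i, j, Nat.le_findGreatest hfirstN.le hfirst, hbound j hj,
    not_not.1 (Nat.find_min hex (by omega)), hfirst, hj, ?_⟩
  by_contra h
  exact Nat.findGreatest_is_greatest (Nat.lt_succ_self j) (hbound _ h).le h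

namespace SubdivVert

variable {V : Type*} [LinearOrder V] {G : SimpleGraph V} {ℓ : ℕ} {u v u' v' : V}

abbrev Edge (G : SimpleGraph V) := {p : V × V // G.Adj p.1 p.2 ∧ p.1 < p.2}

def edgeOf (h : G.Adj u v) : Edge G :=
  ⟨(min u v, max u v), by
    rcases le_total u v with huv | hvu
    · rwa [min_eq_left huv, max_eq_right huv]
    · rw [min_eq_right hvu, max_eq_left hvu]; exact h.symm, min_lt_max.2 h.ne⟩

lemma edgeOf_of_lt (h : G.Adj u v) (huv : u < v) : edgeOf h = ⟨(u, v), h, huv⟩ :=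
  Subtype.ext (Prod.ext (min_eq_left huv.le) (max_eq_right huv.le))

lemma edgeOf_symm (h : G.Adj u v) : edgeOf h.symm = edgeOf h :=
  Subtype.ext (Prod.ext (min_comm _ _) (max_comm _ _))

lemma eq_right_of_edgeOf_eq (h : G.Adj u v) (h' : G.Adj u' v') (he : edgeOf h = edgeOf h')
    (hu : u = u') : v = v' := by
  subst hu
  have hmin : min u v = min u v' := congrArg (·.1.1) he
  have hmax : max u v = max u v' := congrArg (·.1.2) he
  grind

lemma eq_left_of_edgeOf_eq (h : G.Adj u v) (h' : G.Adj u' v') (he : edgeOf h = edgeOf h')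
    (hv : v = v') : u = u' := by
  rw [← edgeOf_symm h, ← edgeOf_symm h'] at he
  exact eq_right_of_edgeOf_eq _ _ he hv

def vertexAt (e : Edge G) (r : ℕ) : SubdivVert G ℓ :=
  if h0 : r = 0 then .inl e.1.1 else if h : r ≤ ℓ then .inr (e, ⟨r - 1, by omega⟩) else .inl e.1.2

lemma vertexAt_zero (e : Edge G) : (vertexAt e 0 : SubdivVert G ℓ) = .inl e.1.1 := rfl

lemma vertexAt_top (e : Edge G) : (vertexAt e (ℓ + 1) : SubdivVert G ℓ) = .inl e.1.2 := by
  simp [vertexAt]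

lemma vertexAt_eq_inr (e : Edge G) {r : ℕ} (h1 : 1 ≤ r) (h2 : r ≤ ℓ) :
    (vertexAt e r : SubdivVert G ℓ) = .inr (e, ⟨r - 1, by omega⟩) := by
  rw [vertexAt, dif_neg (by omega), dif_pos h2]

lemma eq_vertexAt_of_adj (e : Edge G) {r : ℕ} (h1 : 1 ≤ r) (h2 : r ≤ ℓ) {z : SubdivVert G ℓ}
    (hz : (subdivide G ℓ).Adj (vertexAt e r) z) :
    z = vertexAt e (r - 1) ∨ z = vertexAt e (r + 1) := by
  rw [vertexAt_eq_inr e h1 h2] at hz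
  rcases z with w | ⟨f, j⟩
  · rcases hz with ⟨rfl, hr⟩ | ⟨rfl, hr⟩
    · left
      rw [show r - 1 = 0 by simp at hr; omega, vertexAt_zero]
    · right
      rw [show r + 1 = ℓ + 1 by simp at hr; omega, vertexAt_top]
  · obtain ⟨rfl, hj⟩ := hz
    simp only at hj
    rcases hj with hj | hj
    · right
      rw [vertexAt_eq_inr e (by omega) (by omega)]
      congr; ext; simp; omega
    · left
      rw [vertexAt_eq_inr e (by omega) (by omega)]
      congr; ext; simp; omega

/-- The vertex at distance `r ≤ ℓ + 1` from `u` on the subdivided edge `uv`. -/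
def along (h : G.Adj u v) (r : ℕ) : SubdivVert G ℓ :=
  if u < v then vertexAt (edgeOf h) r else vertexAt (edgeOf h) (ℓ + 1 - r)

lemma along_zero (h : G.Adj u v) : (along h 0 : SubdivVert G ℓ) = .inl u := by
  rcases h.ne.lt_or_gt with huv | hvu
  · simp [along, huv, vertexAt_zero, edgeOf, huv.le]
  · simp [along, hvu.not_gt, vertexAt_top, edgeOf, hvu.le]

lemma along_top (h : G.Adj u v) : (along h (ℓ + 1) : SubdivVert G ℓ) = .inl v := by
  rcases h.ne.lt_or_gt with huv | hvu
  · simp [along, huv, vertexAt_top, edgeOf, huv.le]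
  · simp [along, hvu.not_gt, vertexAt_zero, edgeOf, hvu.le]

lemma exists_along_eq_inr (h : G.Adj u v) {r : ℕ} (h1 : 1 ≤ r) (h2 : r ≤ ℓ) :
    ∃ i, (along h r : SubdivVert G ℓ) = .inr (edgeOf h, i) := by
  unfold along
  split_ifs
  · exact ⟨_, vertexAt_eq_inr _ h1 h2⟩
  · exact ⟨_, vertexAt_eq_inr _ (by omega) (by omega)⟩

lemma edgeOf_eq_of_along_eq (h : G.Adj u v) (h' : G.Adj u' v') {r : ℕ} (h1 : 1 ≤ r)
    (h2 : r ≤ ℓ) (he : (along h r : SubdivVert G ℓ) = along h' r) : edgeOf h = edgeOf h' := by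
  obtain ⟨i, hi⟩ := exists_along_eq_inr (ℓ := ℓ) h h1 h2
  obtain ⟨i', hi'⟩ := exists_along_eq_inr (ℓ := ℓ) h' h1 h2
  rw [hi, hi'] at he
  exact (Prod.mk.inj (Sum.inr_injective he)).1

lemma eq_along_of_adj (h : G.Adj u v) {r : ℕ} (h1 : 1 ≤ r) (h2 : r ≤ ℓ) {z : SubdivVert G ℓ}
    (hz : (subdivide G ℓ).Adj (along h r) z) : z = along h (r - 1) ∨ z = along h (r + 1) := by
  unfold along at hz ⊢
  split_ifs at hz ⊢
  · exact eq_vertexAt_of_adj _ h1 h2 hz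
  · rw [show ℓ + 1 - (r - 1) = ℓ + 1 - r + 1 by omega,
      show ℓ + 1 - (r + 1) = ℓ + 1 - r - 1 by omega]
    exact (eq_vertexAt_of_adj _ (by omega) (by omega) hz).symm

lemma exists_along_of_adj_inl {z : SubdivVert G ℓ} (hz : (subdivide G ℓ).Adj (.inl u) z) :
    ∃ (v : V) (h : G.Adj u v), z = along h 1 := by
  rcases z with w | ⟨e, i⟩
  · exact hz.elim
  · rcases hz with ⟨rfl, hi⟩ | ⟨rfl, hi⟩
    · refine ⟨e.1.2, e.2.1, ?_⟩
      rw [along, if_pos e.2.2, edgeOf_of_lt _ e.2.2, vertexAt_eq_inr _ le_rfl i.pos]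
      congr
      ext; simp [hi]
    · refine ⟨e.1.1, e.2.1.symm, ?_⟩
      rw [along, if_neg (not_lt.2 e.2.2.le), edgeOf_symm e.2.1, edgeOf_of_lt _ e.2.2,
        vertexAt_eq_inr _ (by omega) (by omega)]
      congr
      ext; simp [hi]

end SubdivVert

namespace SimpleGraph.Walk

open SubdivVert

variable {V : Type*} [LinearOrder V] {G : SimpleGraph V} {u v : V}

def subdivSupport (ℓ : ℕ) : {u v : V} → G.Walk u v → List (SubdivVert G ℓ)
  | u, _, nil => [.inl u]
  | _, _, cons h p => (List.range (ℓ + 1)).map (along h) ++ p.subdivSupport ℓ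

lemma length_subdivSupport (ℓ : ℕ) (p : G.Walk u v) :
    (p.subdivSupport ℓ).length = p.length * (ℓ + 1) + 1 := by
  induction p with
  | nil => simp [subdivSupport]
  | cons h p ih => simp [subdivSupport, ih]; ring

lemma getElem?_subdivSupport {ℓ : ℕ} (p : G.Walk u v) {k r : ℕ} (hk : k < p.length)
    (hr : r ≤ ℓ) :
    (p.subdivSupport ℓ)[k * (ℓ + 1) + r]? = some (along (p.adj_getVert_succ hk) r) := by
  induction p generalizing k with
  | nil => simp at hk
  | cons h p ih =>
    cases k with
    | zero =>
      rw [subdivSupport, zero_mul, zero_add, List.getElem?_append_left (by simp; omega),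
        List.getElem?_map, List.getElem?_range (by omega)]
      simp [getVert_zero]
    | succ k =>
      rw [subdivSupport, List.getElem?_append_right (by simp; nlinarith)]
      simp only [List.length_map, List.length_range]
      rw [show (k + 1) * (ℓ + 1) + r - (ℓ + 1) = k * (ℓ + 1) + r by ring_nf; omega]
      exact ih (by simpa using hk)

end SimpleGraph.Walk

namespace SubdivVert

open Walk

variable {V : Type*} [LinearOrder V] {G : SimpleGraph V} {ℓ : ℕ} {u v y : V}

/-- Once a path has entered the subdivided edge `uv` from the `u` side, it must run on to `v`. -/
lemma exists_support_eq_along_append (h : G.Adj u v) (n : ℕ) :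
    ∀ r, r + n = ℓ + 1 → 1 ≤ r → ∀ {z : SubdivVert G ℓ} (W : (subdivide G ℓ).Walk z (.inl y)),
      z = along h r → W.IsPath → along h (r - 1) ∉ W.support →
      ∃ W₂ : (subdivide G ℓ).Walk (.inl v) (.inl y),
        W.support = (List.range' r n).map (along h) ++ W₂.support := by
  induction n with
  | zero =>
    intro r hr _ z W hz _ _
    exact ⟨W.copy (by rw [hz, show r = ℓ + 1 by omega, along_top]) rfl, by simp⟩
  | succ n ih =>
    intro r hr h1 z W hz hW hprev
    cases W with
    | nil =>
      obtain ⟨i, hi⟩ := exists_along_eq_inr (ℓ := ℓ) h h1 (by omega)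
      exact (Sum.inl_ne_inr (hz.trans hi)).elim
    | cons hadj W' =>
      subst hz
      rw [cons_isPath_iff] at hW
      rcases eq_along_of_adj h h1 (by omega) hadj with hback | hnext
      · exact (hprev (by simp [← hback])).elim
      · obtain ⟨W₂, hW₂⟩ := ih (r + 1) (by omega) (by omega) W' hnext hW.1 (by simpa using hW.2)
        exact ⟨W₂, by rw [support_cons, hW₂, List.range'_succ]; rfl⟩

lemma exists_support_eq_subdivSupport {x : V} (W : (subdivide G ℓ).Walk (.inl x) (.inl y))
    (hW : W.IsPath) : ∃ W' : G.Walk x y, W.support = W'.subdivSupport ℓ := by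
  induction hn : W.length using Nat.strong_induction_on generalizing x with
  | _ n ih =>
  cases W with
  | nil => exact ⟨nil, rfl⟩
  | cons hadj W₁ =>
    obtain ⟨v, h, rfl⟩ := exists_along_of_adj_inl hadj
    rw [cons_isPath_iff] at hW
    obtain ⟨W₂, hW₂⟩ := exists_support_eq_along_append h ℓ 1 (by omega) le_rfl W₁ rfl hW.1
      (by rw [Nat.sub_self, along_zero]; exact hW.2)
    have hW₂path : W₂.IsPath := by
      have := hW.1
      rw [isPath_def, hW₂] at this
      exact (isPath_def _).2 this.of_append_right
    have hlen : W₂.length < n := by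
      have := congrArg List.length hW₂
      simp only [length_support, List.length_append, List.length_map, List.length_range'] at this
      rw [← hn, length_cons]
      omega
    obtain ⟨W', hW'⟩ := ih _ hlen W₂ hW₂path rfl
    refine ⟨cons h W', ?_⟩
    rw [support_cons, hW₂, hW', subdivSupport, List.range_eq_range', List.range'_succ,
      List.map_cons, along_zero]
    rfl

end SubdivVert

open SubdivVert Walk

lemma two_mul_add_one_le_of_subdivSupport_agree {V : Type*} [LinearOrder V] {G : SimpleGraph V}
    {ℓ : ℕ} (hℓ : 1 ≤ ℓ) {x y : V} {p q : G.Walk x y} (hpq : p ≠ q) (hlen : p.length = q.length)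
    {a m : ℕ}
    (hagree : ∀ j, j < a ∨ a + m ≤ j → (p.subdivSupport ℓ)[j]? = (q.subdivSupport ℓ)[j]?) :
    2 * ℓ + 1 ≤ m := by
  have hblock : ∀ j, (p.subdivSupport ℓ)[j]? ≠ (q.subdivSupport ℓ)[j]? → a ≤ j ∧ j < a + m :=
    fun j hj => by
      by_contra hc
      exact hj (hagree j (by omega))
  obtain ⟨i, j, hij, hjN, hi, hi1, hj, hj1⟩ :=
    exists_first_last_ne (f := p.getVert) (g := q.getVert) (N := p.length) (by simp)
      (fun k hk => by rw [getVert_of_length_le _ hk, getVert_of_length_le _ (hlen ▸ hk)])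
      (fun h => hpq (ext_getVert (congrFun h)))
  have hfirst := hblock (i * (ℓ + 1) + 1) <| by
    rw [getElem?_subdivSupport p (by omega) hℓ, getElem?_subdivSupport q (by omega) hℓ]
    exact fun he => hi1 (eq_right_of_edgeOf_eq _ _
      (edgeOf_eq_of_along_eq _ _ le_rfl hℓ (Option.some_injective _ he)) hi)
  have hlast := hblock (j * (ℓ + 1) + ℓ) <| by
    rw [getElem?_subdivSupport p hjN le_rfl, getElem?_subdivSupport q (hlen ▸ hjN) le_rfl]
    exact fun he => hj (eq_left_of_edgeOf_eq _ _
      (edgeOf_eq_of_along_eq _ _ hℓ le_rfl (Option.some_injective _ he)) hj1)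
  nlinarith

/-- In the `ℓ`-fold subdivision of `G`, if two distinct `s`–`t` shortest paths agree
everywhere except on a single contiguous block of internal positions, then that block
has at least `2ℓ + 1` positions; equivalently, no `k'`-move between distinct `s`–`t`
shortest paths exists for `k' ≤ 2ℓ`. -/
theorem subdivide_no_short_move {V : Type*} [LinearOrder V] (G : SimpleGraph V)
    (ℓ : ℕ) (hℓ : 1 ≤ ℓ) (s t : V)
    (P Q : (subdivide G ℓ).Walk (Sum.inl s) (Sum.inl t))
    (hP : P.length = (subdivide G ℓ).dist (Sum.inl s) (Sum.inl t))
    (hQ : Q.length = (subdivide G ℓ).dist (Sum.inl s) (Sum.inl t))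
    (hne : P ≠ Q) :
    (∀ a m : ℕ, 1 ≤ a → a + m + 1 ≤ P.support.length →
        (∀ j : ℕ, j < a ∨ a + m ≤ j → P.support[j]? = Q.support[j]?) →
        2 * ℓ + 1 ≤ m) ∧
    ∀ k' : ℕ, k' ≤ 2 * ℓ → ¬ kMove k' P.support Q.support := by
  obtain ⟨p, hp⟩ := exists_support_eq_subdivSupport P (P.isPath_of_length_eq_dist hP)
  obtain ⟨q, hq⟩ := exists_support_eq_subdivSupport Q (Q.isPath_of_length_eq_dist hQ)
  have hpq : p ≠ q := by
    rintro rfl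
    exact hne (ext_support (hp.trans hq.symm))
  have hlen : p.length = q.length := by
    have hP' := congrArg List.length hp
    have hQ' := congrArg List.length hq
    simp only [length_support, length_subdivSupport] at hP' hQ'
    exact Nat.eq_of_mul_eq_mul_right (m := ℓ + 1) (by omega) (by omega)
  have key : ∀ a m, (∀ j, j < a ∨ a + m ≤ j → P.support[j]? = Q.support[j]?) → 2 * ℓ + 1 ≤ m :=
    fun a m h => two_mul_add_one_le_of_subdivSupport_agree hℓ hpq hlen (by rwa [hp, hq] at h)
  refine ⟨fun a m _ _ => key a m, ?_⟩
  rintro k' hk' ⟨-, a, m, hm, -, -, h⟩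
  have := key a m h
  omega
end

section
/- Let G be a simple graph on n vertices with vertices s and t, and let k be an integer with k ≥ n/2. Then any two s–t shortest paths in G are k-reconfigurable. -/
/-- One `k`-move between `s`–`t` shortest paths. -/
def KStep {V : Type*} (G : SimpleGraph V) (s t : V) (k : ℕ) (p q : G.Walk s t) : Prop :=
  p.length = G.dist s t ∧ q.length = G.dist s t ∧ kMove k p.support q.support

/-- Two `s`–`t` shortest paths are `k`-reconfigurable if they are joined by a
sequence of `s`–`t` shortest paths in which consecutive paths differ by a `k`-move. -/
def KReconfigurable {V : Type*} (G : SimpleGraph V) (s t : V) (k : ℕ)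
    (p q : G.Walk s t) : Prop :=
  Relation.ReflTransGen (KStep G s t k) p q

/-- The minimum number of `k`-moves needed to transform one `s`–`t` shortest path
into another. -/
noncomputable def kReconfDist {V : Type*} (G : SimpleGraph V) (s t : V) (k : ℕ)
    (P Q : G.Walk s t) : ℕ :=
  sInf {n : ℕ | ∃ f : ℕ → G.Walk s t, f 0 = P ∧ f n = Q ∧
    (∀ i ≤ n, (f i).length = G.dist s t) ∧
    ∀ i < n, kMove k (f i).support (f (i + 1)).support}

/-- The `k`-SPR reconfiguration graph of `(G, s, t)`: one vertex for each `s`–`t`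
shortest path, two paths being adjacent when they differ by a `k`-move. -/
def kSPRGraph {V : Type*} (G : SimpleGraph V) (s t : V) (k : ℕ) :
    SimpleGraph {p : G.Walk s t // p.length = G.dist s t} where
  Adj p q := p ≠ q ∧ kMove k p.1.support q.1.support
  symm := by
    refine ⟨?_⟩
    rintro p q ⟨hne, hlen, a, m, h1, h2, h3, h4⟩
    exact ⟨hne.symm, hlen.symm, a, m, h1, h2, hlen ▸ h3, fun j hj => (h4 j hj).symm⟩
  loopless := by refine ⟨?_⟩; intro p h; exact h.1 rfl

/-!
Let `d = dist(s, t)`. On a shortest path the `i`-th vertex lies at distance `i` from `s`, so `P`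
and `Q` can meet only at a common position `i` with `P i = Q i`, and together they occupy
`2 (d + 1) - c` distinct vertices, `c` being the number of common positions. Hence
`c ≥ 2 (d + 1) - n ≥ 2 (d + 1) - 2 k`, which forces a common position `i` with
`d - k - 1 ≤ i ≤ k + 1` (take `i = 0` when `d ≤ k + 1`). The path following `Q` up to `i` and `P`
afterwards is then one `k`-move from `P` (replace positions `1, …, i - 1`) and one `k`-move from
`Q` (replace positions `i + 1, …, d - 1`).
-/

namespace SimpleGraph.Walk

variable {V : Type*} {G : SimpleGraph V} {u v w : V}

lemma dist_getVert_of_length_eq_dist {p : G.Walk u v} (hp : p.length = G.dist u v) {i : ℕ}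
    (hi : i ≤ p.length) : G.dist u (p.getVert i) = i := by
  have hsub : (p.take i).IsSubwalk p := ⟨nil, p.drop i, by simp⟩
  rw [← length_eq_dist_of_subwalk hp hsub, take_length, min_eq_left hi]

lemma eq_of_getVert_eq_of_length_eq_dist {p : G.Walk u v} {q : G.Walk u w}
    (hp : p.length = G.dist u v) (hq : q.length = G.dist u w) {a b : ℕ} (ha : a ≤ p.length)
    (hb : b ≤ q.length) (h : p.getVert a = q.getVert b) : a = b := by
  rw [← dist_getVert_of_length_eq_dist hp ha, ← dist_getVert_of_length_eq_dist hq hb, h]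

section Splice

def spliceAt (q : G.Walk u v) (p : G.Walk u w) (i : ℕ) (h : q.getVert i = p.getVert i) :
    G.Walk u w :=
  ((q.take i).copy rfl h).append (p.drop i)

variable {q : G.Walk u v} {p : G.Walk u w} {i j : ℕ} {h : q.getVert i = p.getVert i}

lemma getVert_spliceAt (hi : i ≤ q.length) (j : ℕ) :
    (q.spliceAt p i h).getVert j = if j < i then q.getVert j else p.getVert j := by
  rw [spliceAt, getVert_append, length_copy, take_length, min_eq_left hi, getVert_copy,
    take_getVert, drop_getVert]
  split_ifs with hj
  · rw [min_eq_right hj.le]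
  · rw [Nat.add_sub_cancel' (not_lt.mp hj)]

lemma getVert_spliceAt_of_le (hi : i ≤ q.length) (hj : j ≤ i) :
    (q.spliceAt p i h).getVert j = q.getVert j := by
  rw [getVert_spliceAt hi]
  split_ifs with hji
  · rfl
  · rw [le_antisymm hj (not_lt.mp hji), h]

lemma getVert_spliceAt_of_ge (hi : i ≤ q.length) (hj : i ≤ j) :
    (q.spliceAt p i h).getVert j = p.getVert j := by
  rw [getVert_spliceAt hi, if_neg (not_lt.mpr hj)]

lemma length_spliceAt (hq : i ≤ q.length) (hp : i ≤ p.length) :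
    (q.spliceAt p i h).length = p.length := by
  rw [spliceAt, length_append, length_copy, take_length, drop_length, min_eq_left hq]
  omega

end Splice

section CommonPositions

open Finset

variable [DecidableEq V]

def commonPositions (p q : G.Walk u v) : Finset ℕ :=
  {i ∈ range (p.length + 1) | p.getVert i = q.getVert i}

lemma mem_commonPositions {p q : G.Walk u v} {i : ℕ} :
    i ∈ p.commonPositions q ↔ i ≤ p.length ∧ p.getVert i = q.getVert i := by
  simp [commonPositions]

lemma two_mul_succ_le_card_add_card_commonPositions [Fintype V] {p q : G.Walk u v}
    (hp : p.length = G.dist u v) (hq : q.length = G.dist u v) :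
    2 * (G.dist u v + 1) ≤ Fintype.card V + #(p.commonPositions q) := by
  set A := (range (G.dist u v + 1)).image p.getVert
  set B := (range (G.dist u v + 1)).image q.getVert
  have hinj {r : G.Walk u v} (hr : r.length = G.dist u v) :
      Set.InjOn r.getVert (range (G.dist u v + 1)) := fun a ha b hb hab => by
    simp only [coe_range, Set.mem_Iio] at ha hb
    exact eq_of_getVert_eq_of_length_eq_dist hr hr (by omega) (by omega) hab
  have hA : #A = G.dist u v + 1 := by rw [card_image_of_injOn (hinj hp), card_range]
  have hB : #B = G.dist u v + 1 := by rw [card_image_of_injOn (hinj hq), card_range]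
  have hinter : A ∩ B ⊆ (p.commonPositions q).image p.getVert := by
    intro x hx
    simp only [A, B, mem_inter, mem_image, mem_range] at hx
    obtain ⟨⟨a, ha, rfl⟩, ⟨b, hb, hab⟩⟩ := hx
    obtain rfl : b = a := eq_of_getVert_eq_of_length_eq_dist hq hp (by omega) (by omega) hab
    exact mem_image_of_mem _ (mem_commonPositions.mpr ⟨by omega, hab.symm⟩)
  have := card_union_add_card_inter A B
  have := card_le_univ (A ∪ B)
  have := (card_le_card hinter).trans card_image_le
  omega

end CommonPositions

end SimpleGraph.Walk

open Finset SimpleGraph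

lemma Finset.exists_mem_near_both_ends {S : Finset ℕ} {d k : ℕ} (hS : S ⊆ range (d + 1))
    (h0 : 0 ∈ S) (hcard : 2 * (d + 1) ≤ 2 * k + #S) : ∃ i ∈ S, i ≤ k + 1 ∧ d ≤ i + k + 1 := by
  by_cases hd : d ≤ k + 1
  · exact ⟨0, h0, by omega, by omega⟩
  by_contra! hfar
  have hsub : S ⊆ range (d - k - 1) ∪ Ico (k + 2) (d + 1) := by
    intro i hi
    have := mem_range.mp (hS hi)
    have := hfar i hi
    simp only [mem_union, mem_range, mem_Ico]
    omega
  have := (card_le_card hsub).trans (card_union_le _ _)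
  simp only [card_range, Nat.card_Ico] at this
  omega

section Reconfiguration

variable {V : Type*} {G : SimpleGraph V}

lemma kMove_support_of_getVert_eq {u v : V} {p q : G.Walk u v} (hlen : p.length = q.length)
    {k lo hi : ℕ} (hlohi : lo < hi) (hhi : hi ≤ p.length) (hk : hi ≤ lo + k + 1)
    (h : ∀ j, j ≤ lo ∨ hi ≤ j → p.getVert j = q.getVert j) : kMove k p.support q.support := by
  refine ⟨by simp [hlen], lo + 1, hi - lo - 1, by omega, by omega, by simp; omega,
    fun j hj => ?_⟩
  by_cases hjp : j ≤ p.length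
  · rw [← Walk.getVert_eq_support_getElem? p hjp,
      ← Walk.getVert_eq_support_getElem? q (hlen ▸ hjp), h j (by omega)]
  · rw [List.getElem?_eq_none (by simp; omega), List.getElem?_eq_none (by simp; omega)]

lemma kReconfigurable_of_getVert_eq {s t : V} {k : ℕ} {P Q : G.Walk s t}
    (hP : P.length = G.dist s t) (hQ : Q.length = G.dist s t) {lo hi : ℕ}
    (hk : hi ≤ lo + k + 1) (h : ∀ j, j ≤ lo ∨ hi ≤ j → P.getVert j = Q.getVert j) :
    KReconfigurable G s t k P Q := by
  by_cases hPQ : P = Q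
  · exact hPQ ▸ Relation.ReflTransGen.refl
  have hlen : P.length = Q.length := hP.trans hQ.symm
  have getVert_of_length_le {j : ℕ} (hj : P.length ≤ j) : P.getVert j = Q.getVert j := by
    rw [Walk.getVert_of_length_le _ hj, Walk.getVert_of_length_le _ (hlen ▸ hj)]
  obtain ⟨j, hj⟩ : ∃ j, P.getVert j ≠ Q.getVert j := by
    by_contra! hall
    exact hPQ (Walk.ext_getVert hall)
  have hwindow : lo < j ∧ j < hi ∧ j < P.length := by
    by_contra! hout
    exact hj (if hjP : P.length ≤ j then getVert_of_length_le hjP else h j (by omega))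
  -- Both paths end at `t`, so the window may be cut off at the length.
  refine .single ⟨hP, hQ, kMove_support_of_getVert_eq hlen (hi := min hi P.length)
    (by omega) (min_le_right _ _) ((min_le_left _ _).trans hk) fun i hi' => ?_⟩
  by_cases hhi : hi ≤ i
  · exact h i (.inr hhi)
  · exact if hlo : i ≤ lo then h i (.inl hlo) else getVert_of_length_le (by omega)

end Reconfiguration

theorem kReconfigurable_of_half_general {V : Type*} [Fintype V] (G : SimpleGraph V)
    (s t : V) (n k : ℕ) (hn : Fintype.card V = n) (hk : n ≤ 2 * k)
    (P Q : G.Walk s t) (hP : P.length = G.dist s t) (hQ : Q.length = G.dist s t) :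
    KReconfigurable G s t k P Q := by
  classical
  have hcommon := Walk.two_mul_succ_le_card_add_card_commonPositions hP hQ
  have hsub : P.commonPositions Q ⊆ range (G.dist s t + 1) := hP ▸ filter_subset _ _
  obtain ⟨i, hi, hik, hdi⟩ := exists_mem_near_both_ends (k := k) hsub
    (Walk.mem_commonPositions.mpr ⟨by omega, by simp⟩) (by omega)
  obtain ⟨hiP, hPQi⟩ := Walk.mem_commonPositions.mp hi
  set R := Q.spliceAt P i hPQi.symm
  have hR : R.length = G.dist s t := by rw [Walk.length_spliceAt (by omega) hiP, hP]
  refine .trans (kReconfigurable_of_getVert_eq hP hR (lo := 0) (hi := i) (by omega) ?_)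
    (kReconfigurable_of_getVert_eq hR hQ (lo := i) (hi := G.dist s t) (by omega) ?_)
  · rintro j (hj | hj)
    · simp [Nat.le_zero.mp hj]
    · exact (Walk.getVert_spliceAt_of_ge (by omega) hj).symm
  · rintro j (hj | hj)
    · exact Walk.getVert_spliceAt_of_le (by omega) hj
    · rw [Walk.getVert_of_length_le _ (hR ▸ hj), Walk.getVert_of_length_le _ (hQ ▸ hj)]

/-- If `k ≥ n/2`, any two `s`–`t` shortest paths in a simple graph on `n` vertices
are `k`-reconfigurable. -/
theorem kReconfigurable_of_half {V : Type*} [Fintype V] (G : SimpleGraph V)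
    (s t : V) (n k : ℕ) (hn : Fintype.card V = n) (hk₁ : 1 ≤ k) (hk : n ≤ 2 * k)
    (P Q : G.Walk s t) (hP : P.length = G.dist s t) (hQ : Q.length = G.dist s t) :
    KReconfigurable G s t k P Q :=
  kReconfigurable_of_half_general G s t n k hn hk P Q hP hQ
end

section
/- For all positive integers g and l, there exists a simple graph G on exactly 1 + g(l + 1) vertices with two vertices s and t such that the graph distance d(s,t) equals 2g and the number of distinct s–t shortest paths in G is exactly l^g. (Such a graph is obtained by chaining g gadgets in series: take vertices u_0 = s, u_1, …, u_g = t, and for each i ∈ {1,…,g} a set A_i of l additional vertices each adjacent to both u_{i−1} and u_i, with no other edges.) -/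
/-!
Rank the hubs `u_i` by `2 i` and the vertices of `A_{i+1}` by `2 i + 1`. Adjacent vertices have
ranks differing by one, so every `s`–`t` walk has length at least `2 g`, and a walk of length
exactly `2 g` visits a vertex of rank `i` at step `i`. Its even steps are forced hubs and each
odd step `2 j + 1` is a free choice in `A_{j+1}`, giving `l ^ g` shortest walks.
-/

open SimpleGraph

namespace SimpleGraph

variable {V W : Type*} {G : SimpleGraph V} {H : SimpleGraph W}

lemma Walk.exists_getVert_eq (f : ℕ → V) (n : ℕ) (hf : ∀ i < n, G.Adj (f i) (f (i + 1))) :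
    ∃ p : G.Walk (f 0) (f n), p.length = n ∧ ∀ i ≤ n, p.getVert i = f i := by
  induction n generalizing f with
  | zero => exact ⟨.nil, rfl, fun i hi => by simp [Nat.le_zero.mp hi]⟩
  | succ n ih =>
    obtain ⟨p, hp, hpf⟩ := ih (fun i => f (i + 1)) fun i hi => hf (i + 1) (by omega)
    refine ⟨.cons (hf 0 n.succ_pos) p, by simp [hp], fun i hi => ?_⟩
    cases i with
    | zero => simp
    | succ i => simpa using hpf i (by omega)

section Lipschitz

variable {r : V → ℕ}

lemma Walk.apply_le_apply_add_length (hr : ∀ ⦃a b⦄, G.Adj a b → r b ≤ r a + 1)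
    {u v : V} (p : G.Walk u v) : r v ≤ r u + p.length := by
  induction p with
  | nil => simp
  | cons h _ ih => have := hr h; simp only [Walk.length_cons]; omega

lemma Walk.apply_getVert_of_apply_eq_add_length (hr : ∀ ⦃a b⦄, G.Adj a b → r b ≤ r a + 1)
    {u v : V} (p : G.Walk u v)
    (hp : r v = r u + p.length) {i : ℕ} (hi : i ≤ p.length) : r (p.getVert i) = r u + i := by
  have h_take := (p.take i).apply_le_apply_add_length hr
  have h_drop := (p.drop i).apply_le_apply_add_length hr
  simp only [Walk.take_length, Walk.drop_length] at h_take h_drop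
  omega

lemma Reachable.apply_le_apply_add_dist (hr : ∀ ⦃a b⦄, G.Adj a b → r b ≤ r a + 1)
    {u v : V} (h : G.Reachable u v) : r v ≤ r u + G.dist u v := by
  obtain ⟨p, hp⟩ := h.exists_walk_length_eq_dist
  exact hp ▸ p.apply_le_apply_add_length hr

end Lipschitz

noncomputable def Iso.walkEquiv (φ : G ≃g H) (u v : V) : G.Walk u v ≃ H.Walk (φ u) (φ v) :=
  Equiv.ofBijective (Walk.map φ.toHom)
    ⟨Walk.map_injective_of_injective φ.injective u v, fun q =>
      ⟨(q.map φ.symm.toHom).copy (φ.symm_apply_apply u) (φ.symm_apply_apply v),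
        Walk.ext_getVert fun k => by
          simp only [Walk.getVert_map, Walk.getVert_copy]
          exact φ.apply_symm_apply _⟩⟩

@[simp]
lemma Iso.length_walkEquiv (φ : G ≃g H) {u v : V} (p : G.Walk u v) :
    (φ.walkEquiv u v p).length = p.length :=
  Walk.length_map _ p

lemma Iso.dist_eq (φ : G ≃g H) (u v : V) : H.dist (φ u) (φ v) = G.dist u v := by
  simp only [dist_eq_sInf]
  rw [← (φ.walkEquiv u v).surjective.range_comp]
  simp [Function.comp_def]

lemma Iso.card_walk_length_eq (φ : G ≃g H) (u v : V) (n : ℕ) :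
    Nat.card {q : H.Walk (φ u) (φ v) // q.length = n} =
      Nat.card {p : G.Walk u v // p.length = n} :=
  Nat.card_congr ((φ.walkEquiv u v).subtypeEquiv fun p => by simp).symm

end SimpleGraph

namespace GadgetChain

variable {g l : ℕ}

-- `.inl i` is the hub `u_i`; `.inr (j, k)` is the `k`-th vertex of `A_{j+1}`.
abbrev Vertex (g l : ℕ) := Fin (g + 1) ⊕ Fin g × Fin l

def graph (g l : ℕ) : SimpleGraph (Vertex g l) where
  Adj a b :=
    match a, b with
    | .inl i, .inr (j, _) => (i : ℕ) = j ∨ (i : ℕ) = j + 1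
    | .inr (j, _), .inl i => (i : ℕ) = j ∨ (i : ℕ) = j + 1
    | _, _ => False
  symm := ⟨by rintro (i | ⟨j, k⟩) (i' | ⟨j', k'⟩) h <;> exact h⟩
  loopless := ⟨by rintro (i | ⟨j, k⟩) h <;> exact h⟩

def rank : Vertex g l → ℕ
  | .inl i => 2 * i
  | .inr (j, _) => 2 * j + 1

def source : Vertex g l := .inl 0

def target : Vertex g l := .inl (Fin.last g)

lemma rank_le_of_adj ⦃a b : Vertex g l⦄ (h : (graph g l).Adj a b) : rank b ≤ rank a + 1 := by
  rcases a with i | ⟨j, k⟩ <;> rcases b with i' | ⟨j', k'⟩ <;>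
    simp only [graph] at h <;> simp only [rank] <;> omega

lemma eq_of_rank_eq_of_even {v w : Vertex g l} (h : rank v = rank w) (he : Even (rank v)) :
    v = w := by
  rw [Nat.even_iff] at he
  rcases v with i | ⟨j, k⟩ <;> rcases w with i' | ⟨j', k'⟩ <;> simp only [rank] at h he
  · simp only [Sum.inl.injEq, Fin.ext_iff]
    omega
  all_goals omega

lemma exists_eq_inr_of_rank_eq {v : Vertex g l} (j : Fin g) (h : rank v = 2 * j + 1) :
    ∃ k, v = .inr (j, k) := by
  rcases v with i | ⟨j', k⟩ <;> simp only [rank] at h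
  · omega
  · exact ⟨k, by simp only [Sum.inr.injEq, Prod.mk.injEq, Fin.ext_iff, and_true]; omega⟩

lemma rank_getVert {p : (graph g l).Walk source target} (hp : p.length = 2 * g) {i : ℕ}
    (hi : i ≤ 2 * g) : rank (p.getVert i) = i := by
  have hp' : rank (target : Vertex g l) = rank (source : Vertex g l) + p.length := by
    rw [hp]; simp [rank, source, target]
  simpa [rank, source] using p.apply_getVert_of_apply_eq_add_length rank_le_of_adj hp' (hp ▸ hi)

def vertexSeq (c : Fin g → Fin l) (i : ℕ) : Vertex g l :=
  if h : i / 2 < g ∧ i % 2 = 1 then .inr (⟨i / 2, h.1⟩, c ⟨i / 2, h.1⟩)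
  else .inl ⟨min (i / 2) g, by omega⟩

lemma vertexSeq_two_mul (c : Fin g → Fin l) {j : ℕ} (hj : j ≤ g) :
    vertexSeq c (2 * j) = .inl ⟨j, by omega⟩ := by
  have h : ¬(2 * j / 2 < g ∧ 2 * j % 2 = 1) := by omega
  simp only [vertexSeq, dif_neg h, Sum.inl.injEq, Fin.mk.injEq]
  omega

lemma vertexSeq_two_mul_add_one (c : Fin g → Fin l) (j : Fin g) :
    vertexSeq c (2 * j + 1) = .inr (j, c j) := by
  have h : (2 * (j : ℕ) + 1) / 2 = j := by omega
  simp [vertexSeq, h]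

lemma adj_vertexSeq (c : Fin g → Fin l) {i : ℕ} (hi : i < 2 * g) :
    (graph g l).Adj (vertexSeq c i) (vertexSeq c (i + 1)) := by
  obtain ⟨j, rfl | rfl⟩ := Nat.even_or_odd' i
  · rw [vertexSeq_two_mul c (by omega), vertexSeq_two_mul_add_one c ⟨j, by omega⟩]
    exact .inl rfl
  · rw [vertexSeq_two_mul_add_one c ⟨j, by omega⟩, show 2 * j + 1 + 1 = 2 * (j + 1) by ring,
      vertexSeq_two_mul c (by omega)]
    exact .inr rfl

lemma exists_walk_getVert_eq_vertexSeq (c : Fin g → Fin l) :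
    ∃ p : (graph g l).Walk source target,
      p.length = 2 * g ∧ ∀ i ≤ 2 * g, p.getVert i = vertexSeq c i := by
  have h₀ : vertexSeq c 0 = source := vertexSeq_two_mul c (j := 0) (Nat.zero_le g)
  have h₁ : vertexSeq c (2 * g) = target := vertexSeq_two_mul c le_rfl
  rw [← h₀, ← h₁]
  exact Walk.exists_getVert_eq (vertexSeq c) (2 * g) fun i hi => adj_vertexSeq c hi

lemma dist_source_target (hl : 0 < l) : (graph g l).dist source target = 2 * g := by
  obtain ⟨p, hp, -⟩ := exists_walk_getVert_eq_vertexSeq (fun _ : Fin g => (⟨0, hl⟩ : Fin l))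
  refine le_antisymm (hp ▸ dist_le p) ?_
  simpa [rank, source, target] using Reachable.apply_le_apply_add_dist rank_le_of_adj ⟨p⟩

lemma eq_of_getVert_odd_eq {p q : (graph g l).Walk source target} (hp : p.length = 2 * g)
    (hq : q.length = 2 * g) (h : ∀ j : Fin g, p.getVert (2 * j + 1) = q.getVert (2 * j + 1)) :
    p = q := by
  refine Walk.ext_getVert_le_length (hp.trans hq.symm) fun i hi => ?_
  rw [hp] at hi
  obtain ⟨j, rfl | rfl⟩ := Nat.even_or_odd' i
  · refine eq_of_rank_eq_of_even ?_ ?_ <;> simp [rank_getVert hp hi, rank_getVert hq hi]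
  · exact h ⟨j, by omega⟩

lemma card_walk_length_eq :
    Nat.card {p : (graph g l).Walk source target // p.length = 2 * g} = l ^ g := by
  choose w hw_len hw_vert using exists_walk_getVert_eq_vertexSeq (g := g) (l := l)
  have hw_odd (c : Fin g → Fin l) (j : Fin g) : (w c).getVert (2 * j + 1) = .inr (j, c j) := by
    rw [hw_vert c _ (by omega), vertexSeq_two_mul_add_one]
  let F (c : Fin g → Fin l) : {p : (graph g l).Walk source target // p.length = 2 * g} :=
    ⟨w c, hw_len c⟩
  have hF_inj : F.Injective := fun c c' h => funext fun j => by
    simpa [F, hw_odd] using congrArg (fun p => p.1.getVert (2 * j + 1)) h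
  have hF_surj : F.Surjective := by
    rintro ⟨p, hp⟩
    choose c hc using fun j : Fin g => exists_eq_inr_of_rank_eq j (rank_getVert hp (by omega))
    refine ⟨c, Subtype.ext <| eq_of_getVert_odd_eq (hw_len c) hp fun j => ?_⟩
    exact (hw_odd c j).trans (hc j).symm
  rw [← Nat.card_eq_of_bijective F ⟨hF_inj, hF_surj⟩]
  simp

end GadgetChain

theorem exists_gadget_graph_general (g l : ℕ) (hl : 1 ≤ l) :
    ∃ (G : SimpleGraph (Fin (1 + g * (l + 1)))) (s t : Fin (1 + g * (l + 1))),
      G.dist s t = 2 * g ∧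
        Nat.card {p : G.Walk s t // p.length = G.dist s t} = l ^ g := by
  have hcard : Fintype.card (GadgetChain.Vertex g l) = 1 + g * (l + 1) := by
    simp only [Fintype.card_sum, Fintype.card_fin, Fintype.card_prod]
    ring
  let φ := (GadgetChain.graph g l).overFinIso hcard
  have hdist := (φ.dist_eq _ _).trans (GadgetChain.dist_source_target hl)
  refine ⟨_, φ GadgetChain.source, φ GadgetChain.target, hdist, ?_⟩
  rw [hdist, φ.card_walk_length_eq]
  exact GadgetChain.card_walk_length_eq

/-- For all positive integers `g` and `l` there is a simple graph on exactly
`1 + g * (l + 1)` vertices with vertices `s`, `t` such that `d(s,t) = 2g` and the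
number of distinct `s`–`t` shortest paths is exactly `l ^ g`. -/
theorem exists_gadget_graph (g l : ℕ) (hg : 1 ≤ g) (hl : 1 ≤ l) :
    ∃ (G : SimpleGraph (Fin (1 + g * (l + 1)))) (s t : Fin (1 + g * (l + 1))),
      G.dist s t = 2 * g ∧
        Nat.card {p : G.Walk s t // p.length = G.dist s t} = l ^ g :=
  exists_gadget_graph_general g l hl
end

section
/- Let c be a positive integer and let G be a simple graph on n vertices with vertices s and t such that the graph distance satisfies d(s,t) = n − c. Then the number of distinct s–t shortest paths in G is at most c^c. -/
/-!
Let `d = d(s,t)` and, for `i ≤ d`, let `Lᵢ` be the set of vertices at distance `i` from `s`.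
The `i`-th vertex of a shortest `s`–`t` walk lies in `Lᵢ`, and a walk is determined by its
vertices, so there are at most `∏ᵢ |Lᵢ|` shortest walks. The `d + 1` layers are disjoint and
nonempty, so `∑ᵢ (|Lᵢ| - 1) ≤ n - (d + 1) = c - 1`, and since `m ≤ 2 ^ (m - 1)` the product is
at most `2 ^ (c - 1) ≤ c ^ c`.
-/

open Finset

lemma Nat.le_two_pow_pred (m : ℕ) : m ≤ 2 ^ (m - 1) := by
  have := Nat.lt_two_pow_self (n := m - 1)
  omega

lemma Nat.two_pow_pred_le_self_pow (c : ℕ) : 2 ^ (c - 1) ≤ c ^ c := by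
  rcases Nat.lt_or_ge c 2 with hc | hc
  · interval_cases c <;> simp
  · calc 2 ^ (c - 1) ≤ c ^ (c - 1) := Nat.pow_le_pow_left hc _
      _ ≤ c ^ c := Nat.pow_le_pow_right (by omega) (Nat.sub_le c 1)

lemma Finset.prod_le_two_pow_sum_pred {ι : Type*} (s : Finset ι) (f : ι → ℕ) :
    ∏ i ∈ s, f i ≤ 2 ^ ∑ i ∈ s, (f i - 1) := by
  rw [← Finset.prod_pow_eq_pow_sum]
  exact Finset.prod_le_prod' fun i _ ↦ Nat.le_two_pow_pred (f i)

namespace SimpleGraph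

variable {V : Type*} {G : SimpleGraph V}

lemma Walk.dist_getVert_of_length_eq_dist_s15 {u v : V} {p : G.Walk u v}
    (hp : p.length = G.dist u v) (i : ℕ) : G.dist u (p.getVert i) = min i p.length := by
  rw [← length_eq_dist_of_subwalk hp (p.isSubwalk_take i), Walk.take_length]

section distLayer

variable [Fintype V]

noncomputable def distLayer (G : SimpleGraph V) (s : V) (i : ℕ) : Finset V :=
  {v | G.dist s v = i}

@[simp]
lemma mem_distLayer {s v : V} {i : ℕ} : v ∈ G.distLayer s i ↔ G.dist s v = i := by
  simp [distLayer]

lemma Walk.getVert_mem_distLayer {s t : V} {p : G.Walk s t} (hp : p.length = G.dist s t)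
    {i : ℕ} (hi : i ≤ p.length) : p.getVert i ∈ G.distLayer s i := by
  rw [mem_distLayer, p.dist_getVert_of_length_eq_dist_s15 hp, min_eq_left hi]

lemma Reachable.distLayer_nonempty {s t : V} (hst : G.Reachable s t) {i : ℕ}
    (hi : i ≤ G.dist s t) : (G.distLayer s i).Nonempty := by
  obtain ⟨p, hp⟩ := hst.exists_walk_length_eq_dist
  exact ⟨_, p.getVert_mem_distLayer hp (hp ▸ hi)⟩

lemma sum_card_distLayer_le (G : SimpleGraph V) (s : V) (m : ℕ) :
    ∑ i ∈ range m, #(G.distLayer s i) ≤ Fintype.card V := by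
  simp only [distLayer]
  rw [Finset.sum_card_fiberwise_eq_card_filter]
  exact Finset.card_le_univ _

lemma card_shortestWalks_le_prod_card_distLayer (G : SimpleGraph V) (s t : V) :
    Nat.card {p : G.Walk s t // p.length = G.dist s t} ≤
      ∏ i ∈ range (G.dist s t + 1), #(G.distLayer s i) := by
  let vertices (p : {p : G.Walk s t // p.length = G.dist s t}) (i : Fin (G.dist s t + 1)) :
      G.distLayer s i :=
    ⟨p.1.getVert i, p.1.getVert_mem_distLayer p.2 ((Nat.lt_succ_iff.mp i.2).trans p.2.ge)⟩
  have hinj : Function.Injective vertices := by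
    rintro ⟨p, hp⟩ ⟨q, hq⟩ hpq
    refine Subtype.ext (Walk.ext_getVert_le_length (hp.trans hq.symm) fun i hi ↦ ?_)
    exact congrArg Subtype.val (congrFun hpq ⟨i, Nat.lt_succ_of_le (hp ▸ hi)⟩)
  calc _ ≤ Nat.card ((i : Fin (G.dist s t + 1)) → G.distLayer s i) :=
        Nat.card_le_card_of_injective _ hinj
    _ = _ := by
        rw [Nat.card_pi, ← Fin.prod_univ_eq_prod_range (fun i ↦ #(G.distLayer s i))]
        simp only [Nat.card_eq_finsetCard]

end distLayer

end SimpleGraph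

open SimpleGraph in
theorem card_shortestPaths_le_of_long_dist_general {V : Type*} [Fintype V]
    (G : SimpleGraph V) (s t : V) (n c : ℕ)
    (hn : Fintype.card V = n) (hd : G.dist s t = n - c) :
    Nat.card {p : G.Walk s t // p.length = G.dist s t} ≤ c ^ c := by
  by_cases hst : G.Reachable s t
  swap
  · have : IsEmpty {p : G.Walk s t // p.length = G.dist s t} := ⟨fun p ↦ hst ⟨p.1⟩⟩
    simp
  set d := G.dist s t
  have hpos : ∀ i ∈ range (d + 1), 1 ≤ #(G.distLayer s i) := fun i hi ↦
    Finset.card_pos.mpr (hst.distLayer_nonempty (Nat.lt_succ_iff.mp (mem_range.mp hi)))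
  have hexcess : ∑ i ∈ range (d + 1), (#(G.distLayer s i) - 1) ≤ c - 1 := by
    have hsum := sum_card_distLayer_le G s (d + 1)
    rw [Finset.sum_tsub_distrib _ hpos]
    simp only [sum_const, card_range, smul_eq_mul, mul_one]
    omega
  calc _ ≤ ∏ i ∈ range (d + 1), #(G.distLayer s i) :=
        card_shortestWalks_le_prod_card_distLayer G s t
    _ ≤ 2 ^ ∑ i ∈ range (d + 1), (#(G.distLayer s i) - 1) := prod_le_two_pow_sum_pred _ _
    _ ≤ 2 ^ (c - 1) := Nat.pow_le_pow_right two_pos hexcess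
    _ ≤ c ^ c := Nat.two_pow_pred_le_self_pow c

/-- If `d(s,t) = n − c` in a simple graph on `n` vertices (where `c` is a positive
integer), then the number of distinct `s`–`t` shortest paths is at most `c ^ c`. -/
theorem card_shortestPaths_le_of_long_dist {V : Type*} [Fintype V]
    (G : SimpleGraph V) (s t : V) (n c : ℕ) (hc : 1 ≤ c)
    (hn : Fintype.card V = n) (hd : G.dist s t = n - c) (hcn : c ≤ n) :
    Nat.card {p : G.Walk s t // p.length = G.dist s t} ≤ c ^ c :=
  card_shortestPaths_le_of_long_dist_general G s t n c hn hd
end
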